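/- arXiv:1909.01226 — 3 statements merged into one kernel-verified Lean document; each statement's English description precedes it below -/
import Mathlib

section
/- Let v = vec(V₁V₂ᵀ) be a basis vector of the Krylov space K_m(𝒜, vec(C₁C₂ᵀ)) with 𝒜 = ∑_{i=1}^p Bᵢ ⊗ Aᵢ and C₁, C₂ ∈ ℝ^{n×q}. Then, for the (exact, untruncated) Arnoldi process, every vector in K_m(𝒜, vec(C₁C₂ᵀ)) is the vectorization of a matrix of rank at most q·p^{m-1}·m, and in particular 𝒜^{m-1} vec(C₁C₂ᵀ) = vec(M) with rank(M) ≤ q·p^{m-1}. -/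
open Matrix Kronecker

/-- `vec` stacks the columns of a matrix. -/
def vecM {n : ℕ} (X : Matrix (Fin n) (Fin n) ℝ) : Fin n × Fin n → ℝ := fun p => X p.2 p.1

lemma rank_add_le' {n : ℕ} (X Y : Matrix (Fin n) (Fin n) ℝ) :
    (X + Y).rank ≤ X.rank + Y.rank := by
  unfold Matrix.rank
  have h : LinearMap.range (X + Y).mulVecLin ≤
      LinearMap.range X.mulVecLin ⊔ LinearMap.range Y.mulVecLin := by
    rw [Matrix.mulVecLin_add]
    rintro v ⟨w, rfl⟩
    exact Submodule.add_mem_sup ⟨w, rfl⟩ ⟨w, rfl⟩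
  calc Module.finrank ℝ ↥(LinearMap.range (X + Y).mulVecLin)
      ≤ Module.finrank ℝ ↥(LinearMap.range X.mulVecLin ⊔ LinearMap.range Y.mulVecLin) :=
        Submodule.finrank_mono h
    _ ≤ _ := by
        have := Submodule.finrank_add_le_finrank_add_finrank
          (LinearMap.range X.mulVecLin) (LinearMap.range Y.mulVecLin)
        omega

lemma rank_smul_le' {n : ℕ} (c : ℝ) (X : Matrix (Fin n) (Fin n) ℝ) :
    (c • X).rank ≤ X.rank := by
  have : c • X = (c • (1 : Matrix (Fin n) (Fin n) ℝ)) * X := by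
    rw [smul_mul_assoc, one_mul]
  rw [this]
  exact Matrix.rank_mul_le_right _ _

lemma rank_sum_le' {n : ℕ} {ι : Type*} (s : Finset ι) (f : ι → Matrix (Fin n) (Fin n) ℝ) :
    (∑ i ∈ s, f i).rank ≤ ∑ i ∈ s, (f i).rank := by
  classical
  induction s using Finset.induction_on with
  | empty => simp [Matrix.rank_zero]
  | insert _ _ h ih =>
      rw [Finset.sum_insert h, Finset.sum_insert h]
      exact (rank_add_le' _ _).trans (add_le_add_right ih _)

lemma vecM_add {n : ℕ} (X Y : Matrix (Fin n) (Fin n) ℝ) :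
    vecM (X + Y) = vecM X + vecM Y := rfl

lemma vecM_smul {n : ℕ} (c : ℝ) (X : Matrix (Fin n) (Fin n) ℝ) :
    vecM (c • X) = c • vecM X := rfl

lemma vecM_sum {n : ℕ} {ι : Type*} (s : Finset ι) (f : ι → Matrix (Fin n) (Fin n) ℝ) :
    vecM (∑ i ∈ s, f i) = ∑ i ∈ s, vecM (f i) := by
  funext p
  simp [vecM, Matrix.sum_apply]

lemma sum_mulVec' {α ι : Type*} [Fintype α] {s : Finset ι}
    (f : ι → Matrix α α ℝ) (v : α → ℝ) :
    (∑ i ∈ s, f i).mulVec v = ∑ i ∈ s, (f i).mulVec v := by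
  funext x
  simp only [Matrix.mulVec, dotProduct, Matrix.sum_apply, Finset.sum_apply, Finset.sum_mul]
  rw [Finset.sum_comm]

lemma kron_mulVec_vecM {n : ℕ} (A B X : Matrix (Fin n) (Fin n) ℝ) :
    (B ⊗ₖ A).mulVec (vecM X) = vecM (A * X * Bᵀ) := by
  funext pr
  obtain ⟨i, j⟩ := pr
  simp only [Matrix.mulVec, dotProduct, vecM, Matrix.mul_apply, Matrix.transpose_apply,
    Fintype.sum_prod_type, Matrix.kroneckerMap_apply]
  congr 1; funext k
  rw [Finset.sum_mul]
  congr 1; funext l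
  ring

/-- Every vector of K_m(𝒜, vec(C₁C₂ᵀ)), 𝒜 = ∑ᵢ Bᵢ ⊗ Aᵢ, is the vectorization of a
matrix of rank at most q·p^{m-1}·m; in particular 𝒜^{m-1} vec(C₁C₂ᵀ) = vec(M) with
rank(M) ≤ q·p^{m-1}. -/
theorem krylov_rank_bound {n q p m : ℕ} (hp : 1 ≤ p) (hm : 1 ≤ m)
    (A B : Fin p → Matrix (Fin n) (Fin n) ℝ)
    (C₁ C₂ : Matrix (Fin n) (Fin q) ℝ) :
    (∀ v ∈ Submodule.span ℝ
        (Set.range fun k : Fin m =>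
          ((∑ i, (B i) ⊗ₖ (A i)) ^ (k : ℕ)).mulVec (vecM (C₁ * C₂ᵀ))),
      ∃ M : Matrix (Fin n) (Fin n) ℝ, v = vecM M ∧ M.rank ≤ q * p ^ (m - 1) * m) ∧
    (∃ M : Matrix (Fin n) (Fin n) ℝ,
      ((∑ i, (B i) ⊗ₖ (A i)) ^ (m - 1)).mulVec (vecM (C₁ * C₂ᵀ)) = vecM M ∧
      M.rank ≤ q * p ^ (m - 1)) := by
  set 𝒜 : Matrix (Fin n × Fin n) (Fin n × Fin n) ℝ := ∑ i, (B i) ⊗ₖ (A i) with h𝒜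
  -- key: for every k, 𝒜^k (vec (C₁C₂ᵀ)) = vec M with rank M ≤ q * p^k
  have key : ∀ k : ℕ, ∃ M : Matrix (Fin n) (Fin n) ℝ,
      (𝒜 ^ k).mulVec (vecM (C₁ * C₂ᵀ)) = vecM M ∧ M.rank ≤ q * p ^ k := by
    intro k
    induction k with
    | zero =>
        refine ⟨C₁ * C₂ᵀ, by simp, ?_⟩
        simpa using (Matrix.rank_mul_le_left C₁ C₂ᵀ).trans (Matrix.rank_le_card_width C₁)
    | succ k ih =>
        obtain ⟨M, hM, hMr⟩ := ih
        refine ⟨∑ i, A i * M * (B i)ᵀ, ?_, ?_⟩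
        · rw [pow_succ', ← Matrix.mulVec_mulVec, hM, h𝒜, vecM_sum]
          rw [sum_mulVec']
          exact Finset.sum_congr rfl fun i _ => kron_mulVec_vecM _ _ _
        · calc (∑ i, A i * M * (B i)ᵀ).rank ≤ ∑ i : Fin p, (A i * M * (B i)ᵀ).rank :=
                rank_sum_le' _ _
            _ ≤ ∑ _i : Fin p, q * p ^ k := by
                refine Finset.sum_le_sum fun i _ => ?_
                exact ((Matrix.rank_mul_le_left _ _).trans
                  (Matrix.rank_mul_le_right _ _)).trans hMr
            _ = p * (q * p ^ k) := by simp [mul_comm]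
            _ = q * p ^ (k + 1) := by ring
  constructor
  · intro v hv
    rw [Submodule.mem_span_range_iff_exists_fun] at hv
    obtain ⟨c, rfl⟩ := hv
    choose M hM hMr using fun k : Fin m => key (k : ℕ)
    refine ⟨∑ k : Fin m, c k • M k, ?_, ?_⟩
    · rw [vecM_sum]
      exact Finset.sum_congr rfl fun k _ => by rw [hM k, vecM_smul]
    · calc (∑ k : Fin m, c k • M k).rank ≤ ∑ k : Fin m, (c k • M k).rank :=
            rank_sum_le' _ _
        _ ≤ ∑ k : Fin m, q * p ^ (m - 1) := by
            refine Finset.sum_le_sum fun k _ => ?_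
            refine (rank_smul_le' _ _).trans ((hMr k).trans ?_)
            exact Nat.mul_le_mul_left q (Nat.pow_le_pow_right hp (by omega))
        _ = q * p ^ (m - 1) * m := by simp [mul_comm]
  · exact key (m - 1)
end

section
/- If the perturbations in the inexact Arnoldi relation satisfy ‖e⁽ᵏ⁾‖ ≤ ε/(m · |eₖᵀ y_m|) whenever eₖᵀ y_m ≠ 0 (for k = 1,…,m), then the gap between the true and computed residual satisfies ‖r_m − r̃_m‖ ≤ ε. -/
open Matrix

/-- Euclidean norm of a vector in ℝ^N. -/
noncomputable def vecEnorm {N : ℕ} (x : Fin N → ℝ) : ℝ := Real.sqrt (∑ i, x i ^ 2)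

theorem vecEnorm_eq_norm_toLp {N : ℕ} (x : Fin N → ℝ) :
    vecEnorm x = ‖WithLp.toLp 2 x‖ := by
  simp [vecEnorm, EuclideanSpace.norm_eq, Real.norm_eq_abs, sq_abs]

theorem vecEnorm_mulVec_le {N : ℕ} {n : Type*} [Fintype n] (E : Matrix (Fin N) n ℝ)
    (y : n → ℝ) : vecEnorm (E *ᵥ y) ≤ ∑ k, |y k| * vecEnorm (fun i => E i k) := by
  have hcols : WithLp.toLp 2 (E *ᵥ y) = ∑ k, y k • WithLp.toLp 2 (fun i => E i k) := by
    ext i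
    simp [Matrix.mulVec, dotProduct, mul_comm]
  simp only [vecEnorm_eq_norm_toLp, hcols]
  refine (norm_sum_le _ _).trans_eq ?_
  simp only [norm_smul, Real.norm_eq_abs]

theorem abs_mul_le_div_of_le_div_mul_abs {a t ε : ℝ} (m : ℝ) (hε : 0 ≤ ε) (hm : 0 ≤ m)
    (ha : t ≠ 0 → a ≤ ε / (m * |t|)) : |t| * a ≤ ε / m := by
  rcases eq_or_ne t 0 with rfl | ht
  · simpa using div_nonneg hε hm
  · calc |t| * a ≤ |t| * (ε / (m * |t|)) := by gcongr; exact ha ht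
      _ = ε / m := by field_simp [abs_ne_zero.mpr ht]

theorem inexact_arnoldi_relaxed_gap_general {N m : ℕ} (ε : ℝ) (hε : 0 ≤ ε)
    (A : Matrix (Fin N) (Fin N) ℝ) (V : Matrix (Fin N) (Fin (m + 1)) ℝ)
    (E : Matrix (Fin N) (Fin m) ℝ)
    (H : Matrix (Fin (m + 1)) (Fin m) ℝ)
    (hArn : A * V.submatrix id Fin.castSucc - E = V * H)
    (b : Fin N → ℝ) (y : Fin m → ℝ)
    (hE : ∀ k : Fin m, y k ≠ 0 →
      vecEnorm (fun i => E i k) ≤ ε / (m * |y k|)) :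
    vecEnorm ((b + (A * V.submatrix id Fin.castSucc).mulVec y) - (b + (V * H).mulVec y))
      ≤ ε := by
  have hgap : (b + (A * V.submatrix id Fin.castSucc) *ᵥ y) - (b + (V * H) *ᵥ y) = E *ᵥ y := by
    rw [← hArn, sub_mulVec]
    abel
  rw [hgap]
  calc vecEnorm (E *ᵥ y) ≤ ∑ k, |y k| * vecEnorm (fun i => E i k) := vecEnorm_mulVec_le E y
    _ ≤ ∑ _k : Fin m, ε / m :=
        Finset.sum_le_sum fun k _ =>
          abs_mul_le_div_of_le_div_mul_abs m hε m.cast_nonneg (hE k)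
    _ = m * (ε / m) := by simp
    _ ≤ ε := by
        rcases m.eq_zero_or_pos with rfl | hm
        · simpa using hε
        · rw [mul_div_cancel₀ _ (by positivity)]

/-- If each perturbation satisfies ‖e⁽ᵏ⁾‖ ≤ ε/(m·|eₖᵀy|) whenever eₖᵀy ≠ 0,
then the residual gap satisfies ‖r_m − r̃_m‖ ≤ ε. -/
theorem inexact_arnoldi_relaxed_gap {N m : ℕ} (ε : ℝ) (hε : 0 ≤ ε)
    (A : Matrix (Fin N) (Fin N) ℝ) (V : Matrix (Fin N) (Fin (m + 1)) ℝ)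
    (hV : Vᵀ * V = 1) (E : Matrix (Fin N) (Fin m) ℝ)
    (H : Matrix (Fin (m + 1)) (Fin m) ℝ)
    (hArn : A * V.submatrix id Fin.castSucc - E = V * H)
    (b : Fin N → ℝ) (y : Fin m → ℝ)
    (hE : ∀ k : Fin m, y k ≠ 0 →
      vecEnorm (fun i => E i k) ≤ ε / (m * |y k|)) :
    vecEnorm ((b + (A * V.submatrix id Fin.castSucc).mulVec y) - (b + (V * H).mulVec y))
      ≤ ε :=
  inexact_arnoldi_relaxed_gap_general ε hε A V E H hArn b y hE
end

section
/- Combined perturbation bound: if the Arnoldi process is perturbed both by inexact products E_k and by truncation errors F_k, satisfying 𝒜V_m − [vec(E₁+F₁),…,vec(E_m+F_m)] = V_{m+1}H̲_m with V_{m+1} having orthonormal columns, then for any y_m ∈ ℝ^m the true residual r_m = b + 𝒜V_m y_m satisfies ‖r_m‖ ≤ ‖r̃_m‖ + ∑_{j=1}^m (‖E_j‖ + ‖F_j‖)·|e_jᵀ y_m|, where r̃_m = b + V_{m+1}H̲_m y_m is the computed residual. -/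
open Matrix

/-- Euclidean norm of a vector indexed by Fin n × Fin n. -/
noncomputable def enormP {n : ℕ} (x : Fin n × Fin n → ℝ) : ℝ := Real.sqrt (∑ p, x p ^ 2)

/-- Frobenius norm of an n×n matrix. -/
noncomputable def fnorm {n : ℕ} (M : Matrix (Fin n) (Fin n) ℝ) : ℝ :=
  Real.sqrt ((Mᵀ * M).trace)

/-!
The perturbed Arnoldi relation gives `𝒜V_m = V_{m+1}H̲_m + G` with `G` the matrix whose
`j`-th column is `vec(E_j + F_j)`. Hence the true residual is the computed residual plus
`G y = ∑ⱼ y_j vec(E_j + F_j)`, and the triangle inequality, together with the fact that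
`vec` turns the Frobenius norm into the Euclidean norm, gives the bound.
-/

theorem norm_toLp_mulVec_le_sum {ι κ : Type*} [Fintype ι] [Fintype κ]
    (M : Matrix ι κ ℝ) (y : κ → ℝ) :
    ‖WithLp.toLp 2 (M *ᵥ y)‖ ≤ ∑ j, ‖WithLp.toLp 2 (Mᵀ j)‖ * |y j| := by
  have hcols : WithLp.toLp 2 (M *ᵥ y) = ∑ j, y j • WithLp.toLp 2 (Mᵀ j) := by
    ext i
    simp [mulVec, dotProduct, mul_comm]
  rw [hcols]
  refine (norm_sum_le _ _).trans (Finset.sum_le_sum fun j _ => ?_)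
  rw [norm_smul, Real.norm_eq_abs, mul_comm]

theorem enormP_eq_norm {n : ℕ} (x : Fin n × Fin n → ℝ) : enormP x = ‖WithLp.toLp 2 x‖ := by
  simp [EuclideanSpace.norm_eq, enormP]

theorem enormP_add_le {n : ℕ} (x y : Fin n × Fin n → ℝ) :
    enormP (x + y) ≤ enormP x + enormP y := by
  simpa only [enormP_eq_norm, WithLp.toLp_add] using norm_add_le _ _

theorem fnorm_eq_enormP_vecM {n : ℕ} (M : Matrix (Fin n) (Fin n) ℝ) :
    fnorm M = enormP (vecM M) := by
  unfold fnorm enormP vecM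
  congr 1
  simp [Matrix.trace, Matrix.diag, Matrix.mul_apply, Fintype.sum_prod_type, sq]

theorem combined_perturbation_bound_general {n q m : ℕ}
    (A : Matrix (Fin n × Fin n) (Fin n × Fin n) ℝ)
    (V : Matrix (Fin n × Fin n) (Fin (m + 1)) ℝ)
    (E F : Fin m → Matrix (Fin n) (Fin n) ℝ)
    (H : Matrix (Fin (m + 1)) (Fin m) ℝ)
    (hArn : A * V.submatrix id Fin.castSucc -
      (Matrix.of fun i j => vecM (E j + F j) i) = V * H)
    (C₁ C₂ : Matrix (Fin n) (Fin q) ℝ) (y : Fin m → ℝ) :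
    enormP (vecM (C₁ * C₂ᵀ) + (A * V.submatrix id Fin.castSucc).mulVec y) ≤
      enormP (vecM (C₁ * C₂ᵀ) + (V * H).mulVec y) +
      ∑ j, (fnorm (E j) + fnorm (F j)) * |y j| := by
  set G : Matrix (Fin n × Fin n) (Fin m) ℝ := Matrix.of fun i j => vecM (E j + F j) i
  have hAV : A * V.submatrix id Fin.castSucc = V * H + G := by rw [← hArn, sub_add_cancel]
  rw [hAV, add_mulVec, ← add_assoc]
  refine (enormP_add_le _ _).trans (add_le_add_right ?_ _)
  rw [enormP_eq_norm]
  refine (norm_toLp_mulVec_le_sum G y).trans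
    (Finset.sum_le_sum fun j _ => mul_le_mul_of_nonneg_right ?_ (abs_nonneg _))
  rw [fnorm_eq_enormP_vecM, fnorm_eq_enormP_vecM, ← enormP_eq_norm]
  exact enormP_add_le _ _

/-- Combined perturbation bound: if
𝒜V_m − [vec(E₁+F₁),…,vec(E_m+F_m)] = V_{m+1}H̲_m with V_{m+1} having orthonormal
columns, then ‖r_m‖ ≤ ‖r̃_m‖ + ∑ⱼ (‖Eⱼ‖ + ‖Fⱼ‖)|eⱼᵀy| where r_m = b + 𝒜V_m y,
r̃_m = b + V_{m+1}H̲_m y and b = vec(C₁C₂ᵀ). -/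
theorem combined_perturbation_bound {n q m : ℕ}
    (A : Matrix (Fin n × Fin n) (Fin n × Fin n) ℝ)
    (V : Matrix (Fin n × Fin n) (Fin (m + 1)) ℝ) (hV : Vᵀ * V = 1)
    (E F : Fin m → Matrix (Fin n) (Fin n) ℝ)
    (H : Matrix (Fin (m + 1)) (Fin m) ℝ)
    (hArn : A * V.submatrix id Fin.castSucc -
      (Matrix.of fun i j => vecM (E j + F j) i) = V * H)
    (C₁ C₂ : Matrix (Fin n) (Fin q) ℝ) (y : Fin m → ℝ) :
    enormP (vecM (C₁ * C₂ᵀ) + (A * V.submatrix id Fin.castSucc).mulVec y) ≤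
      enormP (vecM (C₁ * C₂ᵀ) + (V * H).mulVec y) +
      ∑ j, (fnorm (E j) + fnorm (F j)) * |y j| :=
  combined_perturbation_bound_general A V E F H hArn C₁ C₂ y
end
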